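/- arXiv:1105.4119 — 6 statements merged into one kernel-verified Lean document; each statement's English description precedes it below -/
import Mathlib

section
/- Let X be a random variable with an absolutely continuous distribution having density p, and let 0 < κ < 1. Then the real line can be partitioned into two Borel sets A_0 and A_1 such that p(x) ≤ p(y) for all x ∈ A_0 and y ∈ A_1, and ∫_{A_0} p(x) dx = κ, ∫_{A_1} p(x) dx = 1 − κ. -/
/-!
Let `P` be the measure with density `p`. A `κ`-quantile `m` of `p` under `P` satisfies
`P {p < m} ≤ κ ≤ P {p ≤ m}`. Since `P` has no atoms, `s ↦ P ({p = m} ∩ Iic s)` is continuous and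
runs from `0` to `P {p = m}`, so some half-line `Iic s` cuts the level set `{p = m}` so that it
carries exactly the missing mass `κ - P {p < m}`. Then `A₀ = {p < m} ∪ ({p = m} ∩ Iic s)` and
`A₁ = A₀ᶜ` work.
-/

open MeasureTheory Set

def IsProbDensity (p : ℝ → ℝ) : Prop :=
  Measurable p ∧ (∀ x, 0 ≤ p x) ∧ (∫ x, p x = 1)

open Filter Topology ENNReal

theorem tendsto_measure_Iic_atBot (ρ : Measure ℝ) [IsFiniteMeasure ρ] :
    Tendsto (fun t => ρ (Iic t)) atBot (𝓝 0) := by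
  have h := tendsto_measure_iInter_atBot (μ := ρ) (fun t => measurableSet_Iic.nullMeasurableSet)
    monotone_Iic ⟨0, measure_ne_top ρ _⟩
  rwa [iInter_Iic_eq_empty_iff.2 (by simp), measure_empty] at h

theorem exists_measure_Iio_le_le_measure_Iic (ρ : Measure ℝ) [IsFiniteMeasure ρ] {c : ℝ≥0∞}
    (hc0 : 0 < c) (hc : c < ρ univ) : ∃ m, ρ (Iio m) ≤ c ∧ c ≤ ρ (Iic m) := by
  set T := {t | c ≤ ρ (Iic t)}
  have hT : T.Nonempty :=
    ((tendsto_measure_Iic_atTop ρ).eventually (eventually_gt_nhds hc)).exists.imp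
      fun _ => le_of_lt
  obtain ⟨t₀, ht₀⟩ :=
    ((tendsto_measure_Iic_atBot ρ).eventually (eventually_lt_nhds hc0)).exists_forall_of_atBot
  have hT_bdd : BddBelow T := ⟨t₀, fun t ht => not_lt.1 fun h => absurd ht (not_le.2 (ht₀ t h.le))⟩
  set m := sInf T
  have h_lt : ∀ t < m, ρ (Iic t) < c := fun t ht =>
    not_le.1 fun h => absurd (csInf_le hT_bdd h) (not_le.2 ht)
  have h_gt : ∀ t > m, c ≤ ρ (Iic t) := fun t ht => by
    obtain ⟨t', ht'T, ht't⟩ := (csInf_lt_iff hT_bdd hT).1 ht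
    exact ht'T.trans (measure_mono (Iic_subset_Iic.2 ht't.le))
  refine ⟨m, ?_, ?_⟩
  · obtain ⟨u, hu_mono, hu_lt, hu⟩ := exists_seq_strictMono_tendsto m
    rw [← iUnion_Iic_eq_Iio_of_lt_of_tendsto hu_lt hu]
    exact le_of_tendsto' (tendsto_measure_iUnion_atTop (monotone_Iic.comp hu_mono.monotone))
      fun n => (h_lt _ (hu_lt n)).le
  · have h := tendsto_measure_biInter_gt (μ := ρ) (fun r _ => measurableSet_Iic.nullMeasurableSet)
      (fun i j _ hij => Iic_subset_Iic.2 hij) ⟨m + 1, by linarith, measure_ne_top _ _⟩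
    have h_inter : (⋂ r > m, Iic r) = Iic m := by
      ext x; simp [forall_gt_imp_ge_iff_le_of_dense]
    rw [h_inter] at h
    exact ge_of_tendsto h (eventually_nhdsWithin_of_forall h_gt)

theorem continuous_measure_Iic (ρ : Measure ℝ) [IsFiniteMeasure ρ] [NullSingletonClass ρ] :
    Continuous fun t => ρ (Iic t) := by
  have h : Continuous fun t => ∫ _ in Iic t, (1 : ℝ) ∂ρ :=
    continuous_iff_continuousAt.2 fun t =>
      ((integrable_const (1 : ℝ)).integrableOn.continuousOn_Iic_primitive_Iic
        (a₀ := t + 1)).continuousAt (Iic_mem_nhds (lt_add_one t))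
  simp only [setIntegral_const, smul_eq_mul, mul_one] at h
  exact (continuous_ofReal.comp h).congr fun t => ofReal_measureReal (measure_ne_top _ _)

theorem exists_measurableSet_measure_inter_eq (ν : Measure ℝ) [IsFiniteMeasure ν]
    [NullSingletonClass ν] (E : Set ℝ) {d : ℝ≥0∞} (hd : d ≤ ν E) :
    ∃ S, MeasurableSet S ∧ ν (E ∩ S) = d := by
  rcases hd.eq_or_lt with rfl | hd
  · exact ⟨univ, .univ, by rw [inter_univ]⟩
  rcases eq_zero_or_pos d with rfl | hd0
  · exact ⟨∅, .empty, by rw [inter_empty, measure_empty]⟩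
  obtain ⟨a, ha⟩ :=
    ((tendsto_measure_Iic_atBot (ν.restrict E)).eventually (eventually_lt_nhds hd0)).exists
  obtain ⟨b, hb⟩ := ((tendsto_measure_Iic_atTop (ν.restrict E)).eventually
    (eventually_gt_nhds (by rwa [Measure.restrict_apply_univ]))).exists
  obtain ⟨s, hs⟩ := intermediate_value_univ a b (continuous_measure_Iic _) ⟨ha.le, hb.le⟩
  exact ⟨Iic s, measurableSet_Iic, by
    rw [inter_comm, ← Measure.restrict_apply measurableSet_Iic]; exact hs⟩

theorem exists_measurableSet_between_sublevelSets_measure_eq (ν : Measure ℝ) [IsFiniteMeasure ν]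
    [NullSingletonClass ν] {f : ℝ → ℝ} (hf : Measurable f) {c : ℝ≥0∞} (hc0 : 0 < c)
    (hc : c < ν univ) :
    ∃ m A, MeasurableSet A ∧ {x | f x < m} ⊆ A ∧ A ⊆ {x | f x ≤ m} ∧ ν A = c := by
  obtain ⟨m, hlt, hle⟩ := exists_measure_Iio_le_le_measure_Iic (ν.map f) hc0
    (by rwa [Measure.map_apply hf .univ, preimage_univ])
  rw [Measure.map_apply hf measurableSet_Iio] at hlt
  rw [Measure.map_apply hf measurableSet_Iic] at hle
  have h_level : MeasurableSet {x | f x = m} := measurableSet_eq_fun hf measurable_const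
  have hdisj : Disjoint {x | f x < m} {x | f x = m} :=
    disjoint_left.2 fun x h₁ h₂ => h₁.ne h₂
  have h_sublevel : ν {x | f x ≤ m} = ν {x | f x < m} + ν {x | f x = m} := by
    rw [← measure_union hdisj h_level]
    congr 1; ext x; simp [le_iff_lt_or_eq]
  obtain ⟨S, hS, hES⟩ := exists_measurableSet_measure_inter_eq ν {x | f x = m}
    (d := c - ν {x | f x < m}) (tsub_le_iff_left.2 (h_sublevel ▸ hle))
  refine ⟨m, {x | f x < m} ∪ ({x | f x = m} ∩ S),
    (measurableSet_lt hf measurable_const).union (h_level.inter hS), subset_union_left,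
    union_subset (fun x (hx : f x < m) => hx.le) (fun x hx => hx.1.le), ?_⟩
  rw [measure_union (hdisj.mono_right inter_subset_left) (h_level.inter hS), hES]
  exact add_tsub_cancel_of_le hlt

theorem measureReal_withDensity_ofReal {α : Type*} [MeasurableSpace α] {μ : Measure α}
    {g : α → ℝ} (hg : Integrable g μ) (hg0 : ∀ x, 0 ≤ g x) {s : Set α} (hs : MeasurableSet s) :
    (μ.withDensity fun x => ENNReal.ofReal (g x)).real s = ∫ x in s, g x ∂μ := by
  rw [measureReal_def, withDensity_apply _ hs,
    ← ofReal_integral_eq_lintegral_ofReal hg.integrableOn (ae_of_all _ hg0),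
    toReal_ofReal (setIntegral_nonneg hs fun x _ => hg0 x)]

/-- Proposition 4.1 (quantile density decomposition): if `X` is a random variable with
density `p` and `0 < κ < 1`, then the real line can be partitioned into two Borel sets
`A₀`, `A₁` such that `p(x) ≤ p(y)` for all `x ∈ A₀`, `y ∈ A₁`, and
`∫_{A₀} p = κ`, `∫_{A₁} p = 1 - κ`. -/
theorem quantile_density_decomposition (p : ℝ → ℝ) (κ : ℝ)
    (hp : IsProbDensity p) (hκ0 : 0 < κ) (hκ1 : κ < 1) :
    ∃ A₀ A₁ : Set ℝ,
      MeasurableSet A₀ ∧ MeasurableSet A₁ ∧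
      A₀ ∪ A₁ = univ ∧ Disjoint A₀ A₁ ∧
      (∀ x ∈ A₀, ∀ y ∈ A₁, p x ≤ p y) ∧
      (∫ x in A₀, p x = κ) ∧ (∫ x in A₁, p x = 1 - κ) := by
  obtain ⟨hp_meas, hp_nonneg, hp_one⟩ := hp
  have hp_int : Integrable p := .of_integral_ne_zero (by rw [hp_one]; exact one_ne_zero)
  have hν : ∀ s, MeasurableSet s →
      (volume.withDensity fun x => ENNReal.ofReal (p x)).real s = ∫ x in s, p x :=
    fun s hs => measureReal_withDensity_ofReal hp_int hp_nonneg hs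
  have := isFiniteMeasure_withDensity_ofReal hp_int.2
  have hν_univ : (volume.withDensity fun x => ENNReal.ofReal (p x)) univ = 1 := by
    rw [← ofReal_measureReal, hν univ .univ, setIntegral_univ, hp_one, ofReal_one]
  obtain ⟨m, A, hA, hlt, hle, hνA⟩ := exists_measurableSet_between_sublevelSets_measure_eq _
    hp_meas (ofReal_pos.2 hκ0) (hν_univ ▸ ofReal_lt_one.2 hκ1)
  have hA_int : ∫ x in A, p x = κ := by
    rw [← hν A hA, measureReal_def, hνA, toReal_ofReal hκ0.le]
  refine ⟨A, Aᶜ, hA, hA.compl, union_compl_self A, disjoint_compl_right,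
    fun x hx y hy => (hle hx).trans (not_lt.1 fun h => hy (hlt h)), hA_int, ?_⟩
  linarith [integral_add_compl hA hp_int]
end

section
/- Let X be a random variable with finite variance σ² > 0 having an absolutely continuous distribution with density p, and let 0 < κ < 1. Let m_κ be a quantile of order κ of the random variable p(X), i.e. a number such that ∫_{p ≤ m_κ} p dx ≥ κ and ∫_{p ≥ m_κ} p dx ≥ 1 − κ. Then m_κ ≤ (1/(σ√(2π)))·e^{(D(X)+1)/(1−κ)}. In particular, for a median m of p(X) (the case κ = 1/2), m ≤ (1/(σ√(2π)))·e^{2D(X)+2}. -/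
open MeasureTheory Set

/-- The entropic distance to normality `D(X) = h(Z) - h(X) = log (σ √(2πe)) + ∫ p log p`
for a random variable with density `p` and standard deviation `σ > 0`. -/
noncomputable def entDist (p : ℝ → ℝ) (σ : ℝ) : ℝ :=
  Real.log (σ * Real.sqrt (2 * Real.pi * Real.exp 1)) + ∫ x, p x * Real.log (p x)

theorem mul_log_sub_ge' (u v : ℝ) (hu : 0 ≤ u) (hv : 0 < v) :
    u - v ≤ u * Real.log u - u * Real.log v := by
  rcases eq_or_lt_of_le hu with h | h
  · simp [← h]; positivity
  · have h1 : Real.log (v / u) ≤ v / u - 1 := Real.log_le_sub_one_of_pos (by positivity)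
    have h3 : u * Real.log (v / u) ≤ u * (v / u - 1) := mul_le_mul_of_nonneg_left h1 hu
    have h4 : u * (v / u - 1) = v - u := by field_simp
    have h5 : u * Real.log (v / u) = u * Real.log v - u * Real.log u := by
      rw [Real.log_div (ne_of_gt hv) (ne_of_gt h)]; ring
    linarith

theorem integrable_of_integral_ne_zero' {p : ℝ → ℝ} (h : (∫ x, p x) ≠ 0) :
    Integrable p := by
  by_contra hc
  exact h (integral_undef hc)

/-- Proposition 5.1: let `X` be a random variable with density `p`, finite variance
`σ² > 0` and finite entropy, let `0 < κ < 1` and let `m` be a quantile of order `κ` of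
the random variable `p(X)` (so that `∫_{p ≤ m} p ≥ κ` and `∫_{p ≥ m} p ≥ 1 - κ`). Then
`m ≤ (1/(σ√(2π)))·e^{(D(X)+1)/(1-κ)}`; in particular, for a median of `p(X)` (case
`κ = 1/2`), `m ≤ (1/(σ√(2π)))·e^{2D(X)+2}`. -/
theorem quantile_of_density_le (p : ℝ → ℝ) (a σ κ m : ℝ)
    (hp : IsProbDensity p)
    (hκ0 : 0 < κ) (hκ1 : κ < 1)
    (hσ : 0 < σ)
    (hmean : ∫ x, x * p x = a)
    (hvar : ∫ x, (x - a) ^ 2 * p x = σ ^ 2)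
    (hent : Integrable (fun x => p x * Real.log (p x)) volume)
    (hq₀ : κ ≤ ∫ x in {x : ℝ | p x ≤ m}, p x)
    (hq₁ : 1 - κ ≤ ∫ x in {x : ℝ | m ≤ p x}, p x) :
    m ≤ 1 / (σ * Real.sqrt (2 * Real.pi)) *
        Real.exp ((entDist p σ + 1) / (1 - κ)) ∧
    (κ = 1 / 2 →
      m ≤ 1 / (σ * Real.sqrt (2 * Real.pi)) *
          Real.exp (2 * entDist p σ + 2)) := by
  have hπ := Real.pi_pos
  set K := σ * Real.sqrt (2 * Real.pi) with hKdef
  have hK : 0 < K := by positivity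
  set b : ℝ := 1 / (2 * σ ^ 2) with hbdef
  have hb : 0 < b := by positivity
  set φ : ℝ → ℝ := fun x => K⁻¹ * Real.exp (-b * (x - a) ^ 2) with hφdef
  have hφpos : ∀ x, 0 < φ x := fun x => by positivity
  have hφint : Integrable φ :=
    ((integrable_exp_neg_mul_sq hb).comp_sub_right a).const_mul K⁻¹
  have hφ1 : ∫ x, φ x = 1 := by
    rw [hφdef]
    simp only [integral_const_mul]
    rw [integral_sub_right_eq_self (fun x => Real.exp (-b * x ^ 2)) a, integral_gaussian]
    have h1 : Real.pi / b = σ ^ 2 * (2 * Real.pi) := by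
      rw [hbdef]; field_simp
    rw [h1, Real.sqrt_mul (sq_nonneg σ), Real.sqrt_sq hσ.le]
    exact inv_mul_cancel₀ (ne_of_gt hK)
  have hp1 : ∫ x, p x = 1 := hp.2.2
  have hpint : Integrable p := integrable_of_integral_ne_zero' (by rw [hp1]; norm_num)
  have hvint : Integrable (fun x => (x - a) ^ 2 * p x) :=
    integrable_of_integral_ne_zero' (by rw [hvar]; positivity)
  have hlogφ : ∀ x, Real.log (φ x) = -Real.log K + (-b * (x - a) ^ 2) := by
    intro x
    rw [hφdef]
    rw [Real.log_mul (by positivity) (by positivity), Real.log_inv, Real.log_exp]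
  have hplogφ_eq : (fun x => p x * Real.log (φ x)) =
      fun x => (-Real.log K) * p x + (-b) * ((x - a) ^ 2 * p x) := by
    funext x; rw [hlogφ x]; ring
  have hplogφint : Integrable (fun x => p x * Real.log (φ x)) := by
    rw [hplogφ_eq]
    exact (hpint.const_mul _).add (hvint.const_mul _)
  have hIφ : ∫ x, p x * Real.log (φ x) = -Real.log K - 1 / 2 := by
    rw [hplogφ_eq, integral_add (hpint.const_mul _) (hvint.const_mul _),
      integral_const_mul, integral_const_mul, hp1, hvar, hbdef]
    field_simp; ring
  have hD : entDist p σ = Real.log K + 1 / 2 + ∫ x, p x * Real.log (p x) := by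
    unfold entDist
    have h1 : Real.sqrt (2 * Real.pi * Real.exp 1)
        = Real.sqrt (2 * Real.pi) * Real.sqrt (Real.exp 1) :=
      Real.sqrt_mul (by positivity) _
    rw [h1, ← mul_assoc, Real.log_mul (ne_of_gt hK) (by positivity),
      Real.log_sqrt (Real.exp_pos 1).le, Real.log_exp]
  set f : ℝ → ℝ := fun x => p x * Real.log (p x) - p x * Real.log (φ x) with hfdef
  have hfint : Integrable f := hent.sub hplogφint
  have hfD : ∫ x, f x = entDist p σ := by
    rw [hfdef]
    rw [integral_sub hent hplogφint, hIφ, hD]; ring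
  have hflb : ∀ x, p x - φ x ≤ f x := fun x =>
    mul_log_sub_ge' (p x) (φ x) (hp.2.1 x) (hφpos x)
  have hD0 : 0 ≤ entDist p σ := by
    rw [← hfD]
    have h0 : (0 : ℝ) = ∫ x, (p x - φ x) := by
      rw [integral_sub hpint hφint, hp1, hφ1]; ring
    rw [h0]
    exact integral_mono (hpint.sub hφint) hfint hflb
  have hκ' : 0 < 1 - κ := by linarith
  have hexp0 : 0 ≤ (entDist p σ + 1) / (1 - κ) :=
    div_nonneg (by linarith) hκ'.le
  have hmain : m ≤ 1 / K * Real.exp ((entDist p σ + 1) / (1 - κ)) := by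
    by_cases hm : m ≤ 1 / K
    · calc m ≤ 1 / K := hm
        _ ≤ 1 / K * Real.exp ((entDist p σ + 1) / (1 - κ)) :=
          le_mul_of_one_le_right (by positivity) (Real.one_le_exp hexp0)
    · push_neg at hm
      have hm0 : 0 < m := lt_trans (one_div_pos.mpr hK) hm
      have hc : 0 ≤ Real.log m + Real.log K := by
        have := Real.log_le_log (one_div_pos.mpr hK) hm.le
        rw [one_div, Real.log_inv] at this
        linarith
      set A : Set ℝ := {x : ℝ | m ≤ p x} with hAdef
      have hA : MeasurableSet A := measurableSet_le measurable_const hp.1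
      have hsplit : ∫ x, f x = (∫ x in A, f x) + ∫ x in Aᶜ, f x :=
        (integral_add_compl hA hfint).symm
      have bound1 : -1 ≤ ∫ x in Aᶜ, f x := by
        have e1 : ∫ x in Aᶜ, (p x - φ x) ≤ ∫ x in Aᶜ, f x :=
          integral_mono ((hpint.sub hφint).restrict) (hfint.restrict) hflb
        have e2 : ∫ x in Aᶜ, (p x - φ x) = (∫ x in Aᶜ, p x) - ∫ x in Aᶜ, φ x :=
          integral_sub hpint.restrict hφint.restrict
        have e3 : 0 ≤ ∫ x in Aᶜ, p x :=
          setIntegral_nonneg hA.compl (fun x _ => hp.2.1 x)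
        have e4 : ∫ x in Aᶜ, φ x ≤ 1 := by
          rw [← hφ1]
          exact setIntegral_le_integral hφint (ae_of_all _ fun x => (hφpos x).le)
        linarith
      have bound2 : (Real.log m + Real.log K) * (1 - κ) ≤ ∫ x in A, f x := by
        have hptw : ∀ x ∈ A, (Real.log m + Real.log K) * p x ≤ f x := by
          intro x hx
          have hx' : m ≤ p x := hx
          have h1 : p x * Real.log m ≤ p x * Real.log (p x) :=
            mul_le_mul_of_nonneg_left (Real.log_le_log hm0 hx') (hp.2.1 x)
          have h2 : 0 ≤ b * ((x - a) ^ 2 * p x) := mul_nonneg hb.le (mul_nonneg (sq_nonneg _) (hp.2.1 x))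
          have h3 : f x = p x * Real.log (p x) + Real.log K * p x
              + b * ((x - a) ^ 2 * p x) := by
            rw [hfdef]; simp only [hlogφ x]; ring
          rw [h3]; nlinarith
        have e5 : ∫ x in A, (Real.log m + Real.log K) * p x ≤ ∫ x in A, f x :=
          setIntegral_mono_on ((hpint.const_mul _).restrict) (hfint.restrict) hA hptw
        have e6 : ∫ x in A, (Real.log m + Real.log K) * p x
            = (Real.log m + Real.log K) * ∫ x in A, p x := integral_const_mul _ _
        have e7 : (Real.log m + Real.log K) * (1 - κ)
            ≤ (Real.log m + Real.log K) * ∫ x in A, p x :=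
          mul_le_mul_of_nonneg_left hq₁ hc
        linarith
      have hDlb : (Real.log m + Real.log K) * (1 - κ) - 1 ≤ entDist p σ := by
        rw [← hfD, hsplit]; linarith
      have hlogm : Real.log m ≤ (entDist p σ + 1) / (1 - κ) - Real.log K := by
        have := (le_div_iff₀ hκ').mpr (by linarith :
          (Real.log m + Real.log K) * (1 - κ) ≤ entDist p σ + 1)
        linarith
      calc m = Real.exp (Real.log m) := (Real.exp_log hm0).symm
        _ ≤ Real.exp ((entDist p σ + 1) / (1 - κ) - Real.log K) :=
          Real.exp_le_exp.mpr hlogm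
        _ = 1 / K * Real.exp ((entDist p σ + 1) / (1 - κ)) := by
          rw [Real.exp_sub, Real.exp_log hK]; ring
  refine ⟨hmain, fun hk => ?_⟩
  have heq : (entDist p σ + 1) / (1 - κ) = 2 * entDist p σ + 2 := by
    rw [hk]; ring_nf
  rw [← heq]
  exact hmain
end

section
/- Let X be a random variable with mean zero and finite second moment, having an absolutely continuous distribution with density p and finite entropy. Let 0 < κ < 1 and let p = κ·p_0 + (1 − κ)·p_1 be a quantile density decomposition of p (so p_0, p_1 are the normalized restrictions of p to Borel sets A_0, A_1 with ∫_{A_0} p = κ, ∫_{A_1} p = 1 − κ, and p ≤ p(y) on A_0 for all y ∈ A_1). Let V_0, V_1 be random variables with densities p_0, p_1. Then κ·D(V_0) + (1 − κ)·D(V_1) ≤ D(X) − κ·log κ − (1 − κ)·log(1 − κ). In particular, for the median decomposition (κ = 1/2), D(V_0) + D(V_1) ≤ 2·D(X) + 2·log 2. -/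
open MeasureTheory Set

lemma quantile_aux (p q : ℝ → ℝ) (A : Set ℝ) (κ a s : ℝ)
    (hpm : Measurable p) (hp0 : ∀ x, 0 ≤ p x)
    (hκ : 0 < κ) (hA : MeasurableSet A)
    (hq : ∀ x, q x = A.indicator p x / κ)
    (hmass : ∫ x in A, p x = κ)
    (hpint : Integrable p)
    (hx2 : Integrable (fun x => x ^ 2 * p x))
    (hxp : Integrable (fun x => x * p x))
    (hent : Integrable (fun x => p x * Real.log (p x)))
    (hmean : ∫ x, x * q x = a)
    (hs : 0 ≤ s) (hvar : ∫ x, (x - a) ^ 2 * q x = s ^ 2) :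
    0 < s ∧
    κ * ∫ x, q x * Real.log (q x) = (∫ x in A, p x * Real.log (p x)) - κ * Real.log κ ∧
    κ * s ^ 2 + κ * a ^ 2 = ∫ x in A, x ^ 2 * p x := by
  have hκ' : κ ≠ 0 := ne_of_gt hκ
  -- q is nonneg
  have hq0 : ∀ x, 0 ≤ q x := by
    intro x; rw [hq]
    exact div_nonneg (Set.indicator_nonneg (fun y _ => hp0 y) x) hκ.le
  -- integrability of q
  have hqeq : q = fun x => κ⁻¹ * A.indicator p x := by
    funext x; rw [hq]; ring
  have hqint : Integrable q := by
    rw [hqeq]; exact (hpint.indicator hA).const_mul _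
  -- mass of q is 1
  have hqmass : ∫ x, q x = 1 := by
    have h1 : κ * ∫ x, q x = κ := by
      calc κ * ∫ x, q x = ∫ x, κ * q x := (integral_const_mul κ q).symm
        _ = ∫ x, A.indicator p x := by
            congr 1; funext x; rw [hq]; field_simp
        _ = ∫ x in A, p x := integral_indicator hA
        _ = κ := hmass
    field_simp at h1; exact h1
  -- first moment
  have hm1 : ∫ x in A, x * p x = κ * a := by
    calc ∫ x in A, x * p x = ∫ x, A.indicator (fun y => y * p y) x :=
          (integral_indicator hA).symm
      _ = ∫ x, κ * (x * q x) := by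
          congr 1; funext x
          by_cases hx : x ∈ A
          · simp only [indicator_of_mem hx, hq, indicator_of_mem hx]
            field_simp
          · simp [indicator_of_notMem hx, hq]
      _ = κ * ∫ x, x * q x := integral_const_mul _ _
      _ = κ * a := by rw [hmean]
  -- second moment pieces
  have hint2 : Integrable (fun x => (x - a) ^ 2 * p x) := by
    have h := (hx2.sub ((hxp.const_mul (2 * a)))).add (hpint.const_mul (a ^ 2))
    exact h.congr (Filter.Eventually.of_forall fun x => by simp only [Pi.add_apply, Pi.sub_apply]; ring)
  have hvA : ∫ x in A, (x - a) ^ 2 * p x = κ * s ^ 2 := by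
    calc ∫ x in A, (x - a) ^ 2 * p x
        = ∫ x, A.indicator (fun y => (y - a) ^ 2 * p y) x := (integral_indicator hA).symm
      _ = ∫ x, κ * ((x - a) ^ 2 * q x) := by
          congr 1; funext x
          by_cases hx : x ∈ A
          · simp only [indicator_of_mem hx, hq, indicator_of_mem hx]
            field_simp
          · simp [indicator_of_notMem hx, hq]
      _ = κ * ∫ x, (x - a) ^ 2 * q x := integral_const_mul _ _
      _ = κ * s ^ 2 := by rw [hvar]
  have hsplit2 : ∫ x in A, (x - a) ^ 2 * p x
      = (∫ x in A, x ^ 2 * p x) - 2 * a * (∫ x in A, x * p x) + a ^ 2 * ∫ x in A, p x := by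
    have e1 : ∫ x in A, (x - a) ^ 2 * p x
        = ∫ x in A, (x ^ 2 * p x - 2 * a * (x * p x) + a ^ 2 * p x) :=
      integral_congr_ae (Filter.Eventually.of_forall fun x => by ring)
    have i2 : Integrable (fun x => a ^ 2 * p x) (volume.restrict A) :=
      hpint.integrableOn.const_mul _
    have i4 : Integrable (fun x => 2 * a * (x * p x)) (volume.restrict A) :=
      hxp.integrableOn.const_mul _
    have i3 : Integrable (fun x => x ^ 2 * p x) (volume.restrict A) := hx2.integrableOn
    have i1 : Integrable (fun x => x ^ 2 * p x - 2 * a * (x * p x)) (volume.restrict A) :=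
      i3.sub i4
    rw [e1, integral_add i1 i2, integral_sub i3 i4, integral_const_mul, integral_const_mul]
  have hV : κ * s ^ 2 + κ * a ^ 2 = ∫ x in A, x ^ 2 * p x := by
    rw [hsplit2, hm1, hmass] at hvA; nlinarith [hvA]
  -- entropy identity
  have hE : κ * ∫ x, q x * Real.log (q x)
      = (∫ x in A, p x * Real.log (p x)) - κ * Real.log κ := by
    calc κ * ∫ x, q x * Real.log (q x)
        = ∫ x, κ * (q x * Real.log (q x)) := (integral_const_mul _ _).symm
      _ = ∫ x, A.indicator (fun y => p y * Real.log (p y) - p y * Real.log κ) x := by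
          congr 1; funext x
          by_cases hx : x ∈ A
          · simp only [indicator_of_mem hx, hq, indicator_of_mem hx]
            rcases eq_or_lt_of_le (hp0 x) with h | h
            · simp [← h]
            · rw [Real.log_div (ne_of_gt h) hκ']
              field_simp
          · simp [indicator_of_notMem hx, hq]
      _ = ∫ x in A, (p x * Real.log (p x) - p x * Real.log κ) := integral_indicator hA
      _ = (∫ x in A, p x * Real.log (p x)) - ∫ x in A, p x * Real.log κ := by
          rw [integral_sub hent.integrableOn ((hpint.integrableOn).mul_const _)]
      _ = (∫ x in A, p x * Real.log (p x)) - κ * Real.log κ := by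
          rw [integral_mul_const, hmass]
  -- positivity of s
  have hspos : 0 < s := by
    rcases eq_or_lt_of_le hs with h | h
    · exfalso
      have hveq : (fun x => (x - a) ^ 2 * q x)
          = fun x => κ⁻¹ * (A.indicator (fun y => (y - a) ^ 2 * p y) x) := by
        funext x
        by_cases hx : x ∈ A
        · simp only [indicator_of_mem hx, hq, indicator_of_mem hx]; field_simp
        · simp [indicator_of_notMem hx, hq]
      have hvint : Integrable (fun x => (x - a) ^ 2 * q x) := by
        rw [hveq]; exact (hint2.indicator hA).const_mul _
      have hzero : ∫ x, (x - a) ^ 2 * q x = 0 := by rw [hvar, ← h]; ring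
      have hae := (integral_eq_zero_iff_of_nonneg
        (fun x => mul_nonneg (sq_nonneg _) (hq0 x)) hvint).mp hzero
      have hane : ∀ᵐ x : ℝ, x ≠ a := by
        rw [ae_iff]
        have : {x : ℝ | ¬x ≠ a} = {a} := by ext x; simp
        rw [this]; exact measure_singleton a
      have hqae : q =ᵐ[volume] 0 := by
        filter_upwards [hae, hane] with x h1 h2
        have : (x - a) ^ 2 * q x = 0 := h1
        have hne : (x - a) ^ 2 ≠ 0 := pow_ne_zero _ (sub_ne_zero.mpr h2)
        simpa [hne] using this
      have : (1 : ℝ) = 0 := by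
        rw [← hqmass, integral_eq_zero_of_ae hqae]
      norm_num at this
    · exact h
  exact ⟨hspos, hE, hV⟩

lemma log_concave_combo {κ σ σ₀ σ₁ : ℝ} (hκ0 : 0 < κ) (hκ1 : κ < 1)
    (h0 : 0 < σ₀) (h1 : 0 < σ₁) (hσ : 0 < σ)
    (hle : κ * σ₀ ^ 2 + (1 - κ) * σ₁ ^ 2 ≤ σ ^ 2) :
    κ * Real.log σ₀ + (1 - κ) * Real.log σ₁ ≤ Real.log σ := by
  have hgm := Real.geom_mean_le_arith_mean2_weighted (w₁ := κ) (w₂ := 1 - κ)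
    (p₁ := σ₀ ^ 2) (p₂ := σ₁ ^ 2) hκ0.le (by linarith)
    (sq_nonneg σ₀) (sq_nonneg σ₁) (by ring)
  have hpos : 0 < (σ₀ ^ 2) ^ κ * (σ₁ ^ 2) ^ (1 - κ) := by positivity
  have h2 := Real.log_le_log hpos hgm
  have h3 := Real.log_le_log (add_pos (mul_pos hκ0 (pow_pos h0 2)) (mul_pos (by linarith : (0:ℝ) < 1 - κ) (pow_pos h1 2))) hle
  rw [Real.log_mul (ne_of_gt (by positivity)) (ne_of_gt (by positivity)),
    Real.log_rpow (by positivity), Real.log_rpow (by positivity)] at h2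
  have e0 : Real.log (σ₀ ^ 2) = 2 * Real.log σ₀ := by
    rw [Real.log_pow]; norm_num
  have e1 : Real.log (σ₁ ^ 2) = 2 * Real.log σ₁ := by
    rw [Real.log_pow]; norm_num
  have eσ : Real.log (σ ^ 2) = 2 * Real.log σ := by
    rw [Real.log_pow]; norm_num
  rw [e0, e1] at h2
  rw [eσ] at h3
  nlinarith [h2, h3]

/-- Proposition 5.2: let `X` have mean zero, finite second moment, density `p` and
finite entropy. Let `p = κ p₀ + (1-κ) p₁` be a quantile density decomposition
(`p₀`, `p₁` are the normalized restrictions of `p` to Borel sets `A₀`, `A₁` partitioning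
the line, with `∫_{A₀} p = κ`, `∫_{A₁} p = 1-κ`, and `p(x) ≤ p(y)` across), and let
`V₀`, `V₁` be random variables with densities `p₀`, `p₁` (with means `a₀`, `a₁` and
standard deviations `σ₀`, `σ₁`). Then
`κ·D(V₀) + (1-κ)·D(V₁) ≤ D(X) - κ log κ - (1-κ) log(1-κ)`;
in particular, for the median decomposition (`κ = 1/2`),
`D(V₀) + D(V₁) ≤ 2 D(X) + 2 log 2`. -/
theorem quantile_decomposition_entropy_bound
    (p p₀ p₁ : ℝ → ℝ) (A₀ A₁ : Set ℝ) (κ σ a₀ a₁ σ₀ σ₁ : ℝ)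
    (hp : IsProbDensity p)
    (hκ0 : 0 < κ) (hκ1 : κ < 1)
    (hmean : ∫ x, x * p x = 0)
    (hσ : 0 < σ) (hvar : ∫ x, x ^ 2 * p x = σ ^ 2)
    (hent : Integrable (fun x => p x * Real.log (p x)) volume)
    (hA₀ : MeasurableSet A₀) (hA₁ : MeasurableSet A₁)
    (hunion : A₀ ∪ A₁ = univ) (hdisj : Disjoint A₀ A₁)
    (hord : ∀ x ∈ A₀, ∀ y ∈ A₁, p x ≤ p y)
    (hmass₀ : ∫ x in A₀, p x = κ) (hmass₁ : ∫ x in A₁, p x = 1 - κ)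
    (hp₀ : ∀ x, p₀ x = A₀.indicator p x / κ)
    (hp₁ : ∀ x, p₁ x = A₁.indicator p x / (1 - κ))
    (hmean₀ : ∫ x, x * p₀ x = a₀) (hmean₁ : ∫ x, x * p₁ x = a₁)
    (hσ₀ : 0 ≤ σ₀) (hvar₀ : ∫ x, (x - a₀) ^ 2 * p₀ x = σ₀ ^ 2)
    (hσ₁ : 0 ≤ σ₁) (hvar₁ : ∫ x, (x - a₁) ^ 2 * p₁ x = σ₁ ^ 2) :
    κ * entDist p₀ σ₀ + (1 - κ) * entDist p₁ σ₁ ≤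
      entDist p σ - κ * Real.log κ - (1 - κ) * Real.log (1 - κ) ∧
    (κ = 1 / 2 →
      entDist p₀ σ₀ + entDist p₁ σ₁ ≤ 2 * entDist p σ + 2 * Real.log 2) := by
  obtain ⟨hpm, hpnn, hpone⟩ := hp
  have hκ1' : (0:ℝ) < 1 - κ := by linarith
  -- integrability facts
  have hpint : Integrable p := by
    by_contra h
    rw [integral_undef h] at hpone; norm_num at hpone
  have hx2 : Integrable (fun x => x ^ 2 * p x) := by
    by_contra h
    rw [integral_undef h] at hvar; nlinarith
  have hxp : Integrable (fun x => x * p x) := by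
    refine Integrable.mono' ((hpint.add hx2).div_const 2)
      ((measurable_id.mul hpm).aestronglyMeasurable) ?_
    refine Filter.Eventually.of_forall fun x => ?_
    rw [Real.norm_eq_abs, abs_mul, abs_of_nonneg (hpnn x)]
    have h1 : |x| ≤ (1 + x ^ 2) / 2 := by nlinarith [sq_nonneg (|x| - 1), sq_abs x, abs_nonneg x]
    have := mul_le_mul_of_nonneg_right h1 (hpnn x)
    calc |x| * p x ≤ (1 + x ^ 2) / 2 * p x := this
      _ = (p x + x ^ 2 * p x) / 2 := by ring
  have hA₁c : A₁ = A₀ᶜ := by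
    ext x
    simp only [mem_compl_iff]
    constructor
    · intro h h0; exact (disjoint_left.mp hdisj) h0 h
    · intro h
      have hx : x ∈ A₀ ∪ A₁ := by rw [hunion]; exact mem_univ x
      rcases hx with hx | hx
      · exact absurd hx h
      · exact hx
  obtain ⟨hs0, hE0, hV0⟩ := quantile_aux p p₀ A₀ κ a₀ σ₀ hpm hpnn hκ0 hA₀ hp₀ hmass₀
    hpint hx2 hxp hent hmean₀ hσ₀ hvar₀
  obtain ⟨hs1, hE1, hV1⟩ := quantile_aux p p₁ A₁ (1 - κ) a₁ σ₁ hpm hpnn hκ1' hA₁ hp₁ hmass₁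
    hpint hx2 hxp hent hmean₁ hσ₁ hvar₁
  -- splitting the entropy and the second moment over A₀, A₁
  have hEsplit : (∫ x in A₀, p x * Real.log (p x)) + (∫ x in A₁, p x * Real.log (p x))
      = ∫ x, p x * Real.log (p x) := by
    rw [hA₁c]; exact integral_add_compl hA₀ hent
  have hVsplit : (∫ x in A₀, x ^ 2 * p x) + (∫ x in A₁, x ^ 2 * p x) = σ ^ 2 := by
    rw [hA₁c, integral_add_compl hA₀ hx2]; exact hvar
  have hvarle : κ * σ₀ ^ 2 + (1 - κ) * σ₁ ^ 2 ≤ σ ^ 2 := by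
    nlinarith [mul_nonneg hκ0.le (sq_nonneg a₀), mul_nonneg hκ1'.le (sq_nonneg a₁)]
  have hlog := log_concave_combo hκ0 hκ1 hs0 hs1 hσ hvarle
  -- expand entDist
  have hc : 0 < Real.sqrt (2 * Real.pi * Real.exp 1) :=
    Real.sqrt_pos.mpr (by positivity)
  have e₀ : entDist p₀ σ₀ = Real.log σ₀ + Real.log (Real.sqrt (2 * Real.pi * Real.exp 1))
      + ∫ x, p₀ x * Real.log (p₀ x) := by
    unfold entDist; rw [Real.log_mul (ne_of_gt hs0) (ne_of_gt hc)]
  have e₁ : entDist p₁ σ₁ = Real.log σ₁ + Real.log (Real.sqrt (2 * Real.pi * Real.exp 1))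
      + ∫ x, p₁ x * Real.log (p₁ x) := by
    unfold entDist; rw [Real.log_mul (ne_of_gt hs1) (ne_of_gt hc)]
  have e : entDist p σ = Real.log σ + Real.log (Real.sqrt (2 * Real.pi * Real.exp 1))
      + ∫ x, p x * Real.log (p x) := by
    unfold entDist; rw [Real.log_mul (ne_of_gt hσ) (ne_of_gt hc)]
  have key : κ * entDist p₀ σ₀ + (1 - κ) * entDist p₁ σ₁ ≤
      entDist p σ - κ * Real.log κ - (1 - κ) * Real.log (1 - κ) := by
    rw [e₀, e₁, e]
    ring_nf at hE0 hE1 hlog ⊢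
    linarith [hE0, hE1, hEsplit, hlog]
  refine ⟨key, fun hhalf => ?_⟩
  rw [hhalf] at key
  have h2 : Real.log ((1:ℝ) / 2) = -Real.log 2 := by
    rw [one_div, Real.log_inv]
  norm_num [h2] at key
  linarith
end

section
/- Let X be a random variable with mean zero and variance σ² > 0, having an absolutely continuous distribution with density p and finite entropy. Let 0 < κ < 1 and let p = κ·p_0 + (1 − κ)·p_1 be a quantile density decomposition of p, and let V_0, V_1 be random variables with densities p_0, p_1 and standard deviations σ_0, σ_1. Then σ_0 > σ·e^{−(D(X)+4)/κ} and σ_1 > σ·e^{−(D(X)+4)/(1−κ)}. -/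
open MeasureTheory Set

/-!
Split `p = κ p₀ + (1 - κ) p₁` into its two disjointly supported pieces. The grouping rule gives
`h(X) = κ h(V₀) + (1 - κ) h(V₁) - κ log κ - (1 - κ) log (1 - κ)`. By Gibbs' inequality against a
Gaussian density, `h(V₀) ≤ log (σ₀ √(2πe))` and `h(V₁) ≤ log (s₁ √(2πe))`, where `s₁² = E V₁²`,
and `(1 - κ) s₁² ≤ E X² = σ²`. Together,
`D(X) ≥ κ log (σ / σ₀) + κ log κ + (3/2) (1 - κ) log (1 - κ) > κ log (σ / σ₀) - 4`.
The bound for `σ₁` is the same statement with the roles of `A₀` and `A₁` exchanged.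
-/

open Real ProbabilityTheory

lemma mul_log_sub_mul_log_le {q φ : ℝ} (hq : 0 ≤ q) (hφ : 0 < φ) :
    q * log φ - q * log q ≤ φ - q := by
  rcases hq.eq_or_lt with rfl | hq
  · simpa using hφ.le
  have h := mul_le_mul_of_nonneg_left (log_le_sub_one_of_pos (div_pos hφ hq)) hq.le
  rw [log_div hφ.ne' hq.ne'] at h
  calc q * log φ - q * log q = q * (log φ - log q) := by ring
    _ ≤ q * (φ / q - 1) := h
    _ = φ - q := by field_simp

lemma integral_mul_log_le_integral_mul_log {α : Type*} [MeasurableSpace α] {μ : Measure α}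
    {q φ : α → ℝ} (hq0 : ∀ x, 0 ≤ q x) (hφ0 : ∀ x, 0 < φ x) (hq : Integrable q μ)
    (hφ : Integrable φ μ) (hφq : ∫ x, φ x ∂μ ≤ ∫ x, q x ∂μ)
    (hqφ : Integrable (fun x => q x * log (φ x)) μ)
    (hqq : Integrable (fun x => q x * log (q x)) μ) :
    ∫ x, q x * log (φ x) ∂μ ≤ ∫ x, q x * log (q x) ∂μ := by
  have h : ∫ x, (q x * log (φ x) - q x * log (q x)) ∂μ ≤ ∫ x, (φ x - q x) ∂μ :=
    integral_mono (hqφ.sub hqq) (hφ.sub hq) fun x => mul_log_sub_mul_log_le (hq0 x) (hφ0 x)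
  rw [integral_sub hqφ hqq, integral_sub hφ hq] at h
  linarith

lemma log_mul_sqrt_two_pi_exp {s : ℝ} (hs : 0 < s) :
    log (s * √(2 * π * exp 1)) = log √(2 * π * s ^ 2) + 1 / 2 := by
  rw [show 2 * π * s ^ 2 = (s * √(2 * π * exp 1)) ^ 2 / exp 1 by
      rw [mul_pow, sq_sqrt (by positivity)]; field_simp,
    sqrt_div' _ (exp_pos 1).le, sqrt_sq (by positivity), log_div (by positivity) (by positivity),
    log_sqrt (exp_pos 1).le, log_exp]
  ring

lemma mul_log_gaussianPDFReal (q a : ℝ) {s : ℝ} (hs : 0 < s) (x : ℝ) :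
    q * log (gaussianPDFReal a (s ^ 2).toNNReal x) =
      (2⁻¹ - log (s * √(2 * π * exp 1))) * q - (2 * s ^ 2)⁻¹ * ((x - a) ^ 2 * q) := by
  rw [gaussianPDFReal, Real.coe_toNNReal _ (sq_nonneg s), log_mul (by positivity) (exp_ne_zero _),
    log_inv, log_exp, log_mul_sqrt_two_pi_exp hs]
  field_simp
  ring

lemma entDist_nonneg {q : ℝ → ℝ} {a s : ℝ} (hs : 0 < s) (hq0 : ∀ x, 0 ≤ q x)
    (hq1 : ∫ x, q x = 1) (hv : ∫ x, (x - a) ^ 2 * q x = s ^ 2)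
    (hent : Integrable fun x => q x * log (q x)) :
    0 ≤ entDist q s := by
  set φ := gaussianPDFReal a (s ^ 2).toNNReal
  have hv0 : (s ^ 2).toNNReal ≠ 0 := by simp [hs.ne']
  have hq : Integrable q := .of_integral_ne_zero (by simp [hq1])
  have hv_int : Integrable fun x => (x - a) ^ 2 * q x :=
    .of_integral_ne_zero (by rw [hv]; positivity)
  have hform : (fun x => q x * log (φ x)) = fun x =>
      (2⁻¹ - log (s * √(2 * π * exp 1))) * q x - (2 * s ^ 2)⁻¹ * ((x - a) ^ 2 * q x) :=
    funext fun x => mul_log_gaussianPDFReal (q x) a hs x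
  have hqφ : Integrable fun x => q x * log (φ x) := by
    rw [hform]; exact (hq.const_mul _).sub (hv_int.const_mul _)
  have hcross : ∫ x, q x * log (φ x) = -log (s * √(2 * π * exp 1)) := by
    rw [hform, integral_sub (hq.const_mul _) (hv_int.const_mul _), integral_const_mul,
      integral_const_mul, hq1, hv]
    field_simp
    ring
  have hgibbs := integral_mul_log_le_integral_mul_log hq0 (gaussianPDFReal_pos a _ · hv0) hq
    (integrable_gaussianPDFReal a _) (by rw [integral_gaussianPDFReal_eq_one a hv0, hq1]) hqφ hent
  rw [entDist]
  linarith

lemma MeasureTheory.Integrable.sq_sub_mul {μ : Measure ℝ} {q : ℝ → ℝ} (hq : Integrable q μ)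
    (h2 : Integrable (fun x => x ^ 2 * q x) μ) (a : ℝ) :
    Integrable (fun x => (x - a) ^ 2 * q x) μ := by
  refine ((h2.norm.const_mul 2).add (hq.norm.const_mul (2 * a ^ 2))).mono'
    ((by fun_prop : Continuous fun x : ℝ => (x - a) ^ 2).aestronglyMeasurable.mul
      hq.aestronglyMeasurable) (.of_forall fun x => ?_)
  simp only [Pi.add_apply, norm_mul, norm_pow, Real.norm_eq_abs, sq_abs]
  nlinarith [mul_nonneg (sq_nonneg (x + a)) (abs_nonneg (q x))]

lemma integral_sq_sub_mul_pos {μ : Measure ℝ} [NullSingletonClass μ] {q : ℝ → ℝ} {a : ℝ}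
    (hq0 : ∀ x, 0 ≤ q x) (hq : ∫ x, q x ∂μ ≠ 0)
    (hint : Integrable (fun x => (x - a) ^ 2 * q x) μ) :
    0 < ∫ x, (x - a) ^ 2 * q x ∂μ := by
  have hnonneg : 0 ≤ fun x => (x - a) ^ 2 * q x := fun x => mul_nonneg (sq_nonneg _) (hq0 x)
  refine (integral_nonneg hnonneg).lt_of_ne' fun h0 => hq ?_
  have hq_ae : q =ᵐ[μ] 0 := by
    filter_upwards [(integral_eq_zero_iff_of_nonneg hnonneg hint).mp h0, μ.ae_ne a] with x hx hxa
    simpa [sub_ne_zero.mpr hxa] using hx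
  simp [integral_congr_ae hq_ae]

section Component

variable {p : ℝ → ℝ} {A : Set ℝ} {κ : ℝ}

lemma IsProbDensity.integrable (hp : IsProbDensity p) : Integrable p :=
  .of_integral_ne_zero (by simp [hp.2.2])

lemma integral_indicator_div (hA : MeasurableSet A) :
    ∫ x, A.indicator p x / κ = (∫ x in A, p x) / κ := by
  rw [integral_div, integral_indicator hA]

lemma IsProbDensity.indicator_div (hp : IsProbDensity p) (hA : MeasurableSet A)
    (hmass : ∫ x in A, p x = κ) (hκ : 0 < κ) :
    IsProbDensity fun x => A.indicator p x / κ :=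
  ⟨(hp.1.indicator hA).div_const κ,
    fun x => div_nonneg (indicator_nonneg (fun y _ => hp.2.1 y) x) hκ.le,
    by rw [integral_indicator_div hA, hmass, div_self hκ.ne']⟩

lemma sq_mul_indicator_div (x : ℝ) :
    x ^ 2 * (A.indicator p x / κ) = A.indicator (fun y => y ^ 2 * p y) x / κ := by
  by_cases hx : x ∈ A <;> simp [hx, mul_div_assoc]

lemma indicator_div_mul_log (hκ : κ ≠ 0) (x : ℝ) :
    A.indicator p x / κ * log (A.indicator p x / κ) =
      A.indicator (fun y => p y * log (p y)) x / κ - log κ * (A.indicator p x / κ) := by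
  by_cases hx : x ∈ A
  · simp only [indicator_of_mem hx]
    rcases eq_or_ne (p x) 0 with h | h
    · simp [h]
    · rw [log_div h hκ]; ring
  · simp [hx]

lemma setIntegral_mul_log_eq (hp : Integrable p) (hent : Integrable fun x => p x * log (p x))
    (hA : MeasurableSet A) (hmass : ∫ x in A, p x = κ) (hκ : κ ≠ 0) :
    Integrable (fun x => A.indicator p x / κ * log (A.indicator p x / κ)) ∧
    ∫ x in A, p x * log (p x) =
      κ * ((∫ x, A.indicator p x / κ * log (A.indicator p x / κ)) + log κ) := by
  simp only [indicator_div_mul_log hκ]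
  have h₁ := (hent.indicator hA).div_const κ
  have h₂ := ((hp.indicator hA).div_const κ).const_mul (log κ)
  refine ⟨h₁.sub h₂, ?_⟩
  rw [integral_sub h₁ h₂, integral_const_mul, integral_indicator_div hA,
    integral_indicator_div hA, hmass]
  field_simp
  ring

lemma integral_sq_mul_indicator_div_mul_le (hx2p : Integrable fun x => x ^ 2 * p x)
    (hp0 : ∀ x, 0 ≤ p x) (hA : MeasurableSet A) (hκ : κ ≠ 0) :
    (∫ x, x ^ 2 * (A.indicator p x / κ)) * κ ≤ ∫ x, x ^ 2 * p x := by
  simp only [sq_mul_indicator_div]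
  rw [integral_indicator_div hA, div_mul_cancel₀ _ hκ]
  exact setIntegral_le_integral hx2p (.of_forall fun x => mul_nonneg (sq_nonneg x) (hp0 x))

lemma integral_sq_sub_mul_indicator_div_pos (hp : IsProbDensity p)
    (hx2p : Integrable fun x => x ^ 2 * p x) (hA : MeasurableSet A)
    (hmass : ∫ x in A, p x = κ) (hκ : 0 < κ) (a : ℝ) :
    0 < ∫ x, (x - a) ^ 2 * (A.indicator p x / κ) := by
  obtain ⟨-, hq0, hq1⟩ := hp.indicator_div hA hmass hκ
  have hx2q : Integrable fun x => x ^ 2 * (A.indicator p x / κ) := by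
    simp only [sq_mul_indicator_div]
    exact (hx2p.indicator hA).div_const κ
  exact integral_sq_sub_mul_pos hq0 (by simp [hq1])
    (((hp.integrable.indicator hA).div_const κ).sq_sub_mul hx2q a)

end Component

lemma integral_mul_log_eq_of_partition {p : ℝ → ℝ} {A B : Set ℝ} {κ : ℝ}
    (hp : Integrable p) (hent : Integrable fun x => p x * log (p x))
    (hA : MeasurableSet A) (hB : MeasurableSet B) (hunion : A ∪ B = univ)
    (hdisj : Disjoint A B) (hmassA : ∫ x in A, p x = κ) (hmassB : ∫ x in B, p x = 1 - κ)
    (hκ0 : κ ≠ 0) (hκ1 : 1 - κ ≠ 0) :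
    ∫ x, p x * log (p x) =
      κ * ((∫ x, A.indicator p x / κ * log (A.indicator p x / κ)) + log κ) +
      (1 - κ) * ((∫ x, B.indicator p x / (1 - κ) * log (B.indicator p x / (1 - κ))) +
        log (1 - κ)) := by
  rw [← (setIntegral_mul_log_eq hp hent hA hmassA hκ0).2,
    ← (setIntegral_mul_log_eq hp hent hB hmassB hκ1).2,
    ← setIntegral_union hdisj hB hent.integrableOn hent.integrableOn, hunion, setIntegral_univ]

lemma log_lt_of_entDist_grouping {p q r : ℝ → ℝ} {κ σ s s₁ : ℝ} (hκ0 : 0 < κ) (hκ1 : κ < 1)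
    (hσ : 0 < σ) (hs : 0 < s) (hs₁ : 0 < s₁)
    (hgroup : ∫ x, p x * log (p x) = κ * ((∫ x, q x * log (q x)) + log κ) +
      (1 - κ) * ((∫ x, r x * log (r x)) + log (1 - κ)))
    (hq : 0 ≤ entDist q s) (hr : 0 ≤ entDist r s₁) (hs₁σ : s₁ ^ 2 * (1 - κ) ≤ σ ^ 2) :
    κ * log σ - (entDist p σ + 4) < κ * log s := by
  have hκ1' : 0 < 1 - κ := sub_pos.mpr hκ1
  have hc : 0 < √(2 * π * exp 1) := by positivity
  simp only [entDist, log_mul hσ.ne' hc.ne', log_mul hs.ne' hc.ne', log_mul hs₁.ne' hc.ne']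
    at hq hr ⊢
  have hlog_s₁ : 2 * log s₁ + log (1 - κ) ≤ 2 * log σ := by
    have := log_le_log (by positivity) hs₁σ
    rwa [log_mul (by positivity) hκ1'.ne', log_pow, log_pow, Nat.cast_ofNat] at this
  have hκ_log : κ - 1 ≤ κ * log κ := by
    have := mul_le_mul_of_nonneg_left (one_sub_inv_le_log_of_pos hκ0) hκ0.le
    rwa [mul_one_sub, mul_inv_cancel₀ hκ0.ne'] at this
  have hκ_log' : -κ ≤ (1 - κ) * log (1 - κ) := by
    have := mul_le_mul_of_nonneg_left (one_sub_inv_le_log_of_pos hκ1') hκ1'.le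
    rw [mul_one_sub, mul_inv_cancel₀ hκ1'.ne'] at this
    linarith
  nlinarith [mul_nonneg hκ0.le hq, mul_nonneg hκ1'.le hr, mul_le_mul_of_nonneg_left hlog_s₁ hκ1'.le]

theorem mul_exp_neg_entDist_div_lt_of_partition {p q : ℝ → ℝ} {A B : Set ℝ} {κ σ a s : ℝ}
    (hp : IsProbDensity p) (hκ0 : 0 < κ) (hκ1 : κ < 1) (hσ : 0 < σ)
    (hvar : ∫ x, x ^ 2 * p x = σ ^ 2) (hent : Integrable fun x => p x * log (p x))
    (hA : MeasurableSet A) (hB : MeasurableSet B) (hunion : A ∪ B = univ) (hdisj : Disjoint A B)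
    (hmassA : ∫ x in A, p x = κ) (hmassB : ∫ x in B, p x = 1 - κ)
    (hq : ∀ x, q x = A.indicator p x / κ) (hs : 0 ≤ s)
    (hvarq : ∫ x, (x - a) ^ 2 * q x = s ^ 2) :
    σ * exp (-(entDist p σ + 4) / κ) < s := by
  obtain rfl : q = fun x => A.indicator p x / κ := funext hq
  have hκ1' : 0 < 1 - κ := sub_pos.mpr hκ1
  have hp_int := hp.integrable
  have hx2p : Integrable fun x => x ^ 2 * p x := .of_integral_ne_zero (by rw [hvar]; positivity)
  have hs_pos : 0 < s := hs.lt_of_ne' fun h => by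
    simpa [hvarq, h] using integral_sq_sub_mul_indicator_div_pos hp hx2p hA hmassA hκ0 a
  have hm₁ := integral_sq_sub_mul_indicator_div_pos hp hx2p hB hmassB hκ1' 0
  simp only [sub_zero] at hm₁
  set s₁ := √(∫ x, x ^ 2 * (B.indicator p x / (1 - κ)))
  have hs₁ : ∫ x, (x - 0) ^ 2 * (B.indicator p x / (1 - κ)) = s₁ ^ 2 := by
    simp [s₁, sq_sqrt hm₁.le]
  have hs₁σ : s₁ ^ 2 * (1 - κ) ≤ σ ^ 2 := by
    rw [← hs₁, ← hvar]
    simpa using integral_sq_mul_indicator_div_mul_le hx2p hp.2.1 hB hκ1'.ne'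
  obtain ⟨-, hq0, hq1⟩ := hp.indicator_div hA hmassA hκ0
  obtain ⟨-, hr0, hr1⟩ := hp.indicator_div hB hmassB hκ1'
  have key := log_lt_of_entDist_grouping hκ0 hκ1 hσ hs_pos (sqrt_pos.2 hm₁)
    (integral_mul_log_eq_of_partition hp_int hent hA hB hunion hdisj hmassA hmassB hκ0.ne'
      hκ1'.ne')
    (entDist_nonneg hs_pos hq0 hq1 hvarq (setIntegral_mul_log_eq hp_int hent hA hmassA hκ0.ne').1)
    (entDist_nonneg (sqrt_pos.2 hm₁) hr0 hr1 hs₁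
      (setIntegral_mul_log_eq hp_int hent hB hmassB hκ1'.ne').1) hs₁σ
  have hexponent : -(entDist p σ + 4) / κ < log s - log σ := by
    rw [div_lt_iff₀ hκ0]
    linarith
  calc σ * exp (-(entDist p σ + 4) / κ) = exp (log σ + -(entDist p σ + 4) / κ) := by
        rw [exp_add, exp_log hσ]
    _ < exp (log s) := exp_lt_exp.2 (by linarith)
    _ = s := exp_log hs_pos

theorem quantile_decomposition_variance_lower_bound_general
    (p p₀ p₁ : ℝ → ℝ) (A₀ A₁ : Set ℝ) (κ σ a₀ a₁ σ₀ σ₁ : ℝ)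
    (hp : IsProbDensity p)
    (hκ0 : 0 < κ) (hκ1 : κ < 1)
    (hσ : 0 < σ) (hvar : ∫ x, x ^ 2 * p x = σ ^ 2)
    (hent : Integrable (fun x => p x * Real.log (p x)) volume)
    (hA₀ : MeasurableSet A₀) (hA₁ : MeasurableSet A₁)
    (hunion : A₀ ∪ A₁ = univ) (hdisj : Disjoint A₀ A₁)
    (hmass₀ : ∫ x in A₀, p x = κ) (hmass₁ : ∫ x in A₁, p x = 1 - κ)
    (hp₀ : ∀ x, p₀ x = A₀.indicator p x / κ)
    (hp₁ : ∀ x, p₁ x = A₁.indicator p x / (1 - κ))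
    (hσ₀ : 0 ≤ σ₀) (hvar₀ : ∫ x, (x - a₀) ^ 2 * p₀ x = σ₀ ^ 2)
    (hσ₁ : 0 ≤ σ₁) (hvar₁ : ∫ x, (x - a₁) ^ 2 * p₁ x = σ₁ ^ 2) :
    σ * Real.exp (-(entDist p σ + 4) / κ) < σ₀ ∧
    σ * Real.exp (-(entDist p σ + 4) / (1 - κ)) < σ₁ := by
  have hκ' : 1 - (1 - κ) = κ := sub_sub_cancel 1 κ
  refine ⟨mul_exp_neg_entDist_div_lt_of_partition hp hκ0 hκ1 hσ hvar hent hA₀ hA₁ hunion hdisj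
    hmass₀ hmass₁ hp₀ hσ₀ hvar₀, ?_⟩
  exact mul_exp_neg_entDist_div_lt_of_partition hp (sub_pos.2 hκ1) (sub_lt_self 1 hκ0) hσ hvar
    hent hA₁ hA₀ (union_comm A₀ A₁ ▸ hunion) hdisj.symm hmass₁ (by rwa [hκ']) hp₁ hσ₁ hvar₁

/-- Proposition 5.3: let `X` have mean zero, variance `σ² > 0`, density `p` and finite
entropy, and let `p = κ p₀ + (1-κ) p₁` be a quantile density decomposition with
`0 < κ < 1`. If `V₀`, `V₁` are random variables with densities `p₀`, `p₁`, means
`a₀`, `a₁` and standard deviations `σ₀`, `σ₁`, then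
`σ₀ > σ·e^{-(D(X)+4)/κ}` and `σ₁ > σ·e^{-(D(X)+4)/(1-κ)}`. -/
theorem quantile_decomposition_variance_lower_bound
    (p p₀ p₁ : ℝ → ℝ) (A₀ A₁ : Set ℝ) (κ σ a₀ a₁ σ₀ σ₁ : ℝ)
    (hp : IsProbDensity p)
    (hκ0 : 0 < κ) (hκ1 : κ < 1)
    (hmean : ∫ x, x * p x = 0)
    (hσ : 0 < σ) (hvar : ∫ x, x ^ 2 * p x = σ ^ 2)
    (hent : Integrable (fun x => p x * Real.log (p x)) volume)
    (hA₀ : MeasurableSet A₀) (hA₁ : MeasurableSet A₁)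
    (hunion : A₀ ∪ A₁ = univ) (hdisj : Disjoint A₀ A₁)
    (hord : ∀ x ∈ A₀, ∀ y ∈ A₁, p x ≤ p y)
    (hmass₀ : ∫ x in A₀, p x = κ) (hmass₁ : ∫ x in A₁, p x = 1 - κ)
    (hp₀ : ∀ x, p₀ x = A₀.indicator p x / κ)
    (hp₁ : ∀ x, p₁ x = A₁.indicator p x / (1 - κ))
    (hmean₀ : ∫ x, x * p₀ x = a₀) (hmean₁ : ∫ x, x * p₁ x = a₁)
    (hσ₀ : 0 ≤ σ₀) (hvar₀ : ∫ x, (x - a₀) ^ 2 * p₀ x = σ₀ ^ 2)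
    (hσ₁ : 0 ≤ σ₁) (hvar₁ : ∫ x, (x - a₁) ^ 2 * p₁ x = σ₁ ^ 2) :
    σ * Real.exp (-(entDist p σ + 4) / κ) < σ₀ ∧
    σ * Real.exp (-(entDist p σ + 4) / (1 - κ)) < σ₁ :=
  quantile_decomposition_variance_lower_bound_general p p₀ p₁ A₀ A₁ κ σ a₀ a₁ σ₀ σ₁ hp hκ0 hκ1 hσ
    hvar hent hA₀ hA₁ hunion hdisj hmass₀ hmass₁ hp₀ hp₁ hσ₀ hvar₀ hσ₁ hvar₁
end

section
/- Let X_1,...,X_n be independent random variables with mean zero and variances σ_l² > 0 with σ_1² + ... + σ_n² = 1, and put σ = max_l σ_l. Given an integer N ≥ 1, define n_0 = 0 and n_k = max{ l ≤ n : σ_1² + ... + σ_l² ≤ k/N }, and set V_k = Σ_{n_{k−1} < l ≤ n_k} X_l for k = 1,...,N. If N ≤ 1/(2σ²), then for each k = 1,...,N, 1/(2N) < Var(V_k) < 2/N. -/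
/-!
Write `S m = σ₁² + ⋯ + σₘ²`, so that `nₖ` is the last index with `S nₖ ≤ k/N` and, by
independence, `Var(Vₖ) = S nₖ - S nₖ₋₁`. Each step of `S` is at most `σ² ≤ 1/(2N)`, so the
greatest index below a threshold `t` undershoots it by less than `1/(2N)`:
`t - 1/(2N) < S nₖ ≤ t`. Applied to the consecutive thresholds `(k-1)/N` and `k/N`, this puts
`Var(Vₖ)` within `1/(2N)` of `1/N`.
-/

open MeasureTheory ProbabilityTheory Finset

namespace Nat

variable {S : ℕ → ℝ} {n : ℕ} {s t δ : ℝ}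

lemma sub_lt_apply_findGreatest (hstep : ∀ m < n, S (m + 1) ≤ S m + δ) (hn : t - δ < S n) :
    t - δ < S (Nat.findGreatest (fun l => S l ≤ t) n) := by
  rcases (Nat.findGreatest_le (P := fun l => S l ≤ t) n).lt_or_eq with hlt | heq
  · have hnext : ¬ S (Nat.findGreatest (fun l => S l ≤ t) n + 1) ≤ t :=
      Nat.findGreatest_is_greatest (Nat.lt_succ_self _) hlt
    linarith [hstep _ hlt]
  · rwa [heq]

lemma findGreatest_mono_of_le (hst : s ≤ t) :
    Nat.findGreatest (fun l => S l ≤ s) n ≤ Nat.findGreatest (fun l => S l ≤ t) n :=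
  Nat.findGreatest_mono (fun _ hl => hl.trans hst) le_rfl

lemma abs_findGreatest_increment_sub_lt (hstep : ∀ m < n, S (m + 1) ≤ S m + δ)
    (h0 : S 0 ≤ s) (hst : s ≤ t) (hs : s - δ < S n) (ht : t - δ < S n) :
    |S (Nat.findGreatest (fun l => S l ≤ t) n) - S (Nat.findGreatest (fun l => S l ≤ s) n)
      - (t - s)| < δ := by
  have hSs : S (Nat.findGreatest (fun l => S l ≤ s) n) ≤ s :=
    Nat.findGreatest_spec (P := fun l => S l ≤ s) n.zero_le h0
  have hSt : S (Nat.findGreatest (fun l => S l ≤ t) n) ≤ t :=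
    Nat.findGreatest_spec (P := fun l => S l ≤ t) n.zero_le (h0.trans hst)
  rw [abs_sub_lt_iff]
  constructor <;> linarith [sub_lt_apply_findGreatest hstep hs, sub_lt_apply_findGreatest hstep ht]

end Nat

lemma le_one_div_of_le_one_div {α : Type*} [Field α] [LinearOrder α] [IsStrictOrderedRing α]
    {a b : α} (ha : 0 < a) (h : a ≤ 1 / b) : b ≤ 1 / a :=
  (le_one_div ha (one_div_pos.mp (ha.trans_le h))).mp h

lemma Finset.sum_Ioc_eq_sum_Icc_one_sub {M : Type*} [AddCommGroup M] (f : ℕ → M) {a b : ℕ}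
    (hab : a ≤ b) :
    ∑ i ∈ Ioc a b, f i = ∑ i ∈ Icc 1 b, f i - ∑ i ∈ Icc 1 a, f i := by
  have hIcc : ∀ m, Icc 1 m = Ioc 0 m := Icc_add_one_left_eq_Ioc 0
  rw [eq_sub_iff_add_eq', hIcc, hIcc]
  exact sum_Ioc_consecutive f a.zero_le hab

lemma ProbabilityTheory.iIndepFun.variance_sum_of_subset {Ω ι : Type*} [MeasurableSpace Ω]
    {μ : Measure Ω} {X : ι → Ω → ℝ} {I s : Finset ι} (hindep : iIndepFun (fun i : I => X i) μ)
    (hL2 : ∀ i ∈ I, MemLp (X i) 2 μ) (hs : s ⊆ I) :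
    variance (fun ω => ∑ i ∈ s, X i ω) μ = ∑ i ∈ s, variance (X i) μ := by
  have hpair : Set.Pairwise (s : Set ι) fun i j => X i ⟂ᵢ[μ] X j := fun i hi j hj hij =>
    hindep.indepFun (i := ⟨i, hs hi⟩) (j := ⟨j, hs hj⟩) (by simpa using hij)
  rw [← IndepFun.variance_sum (fun i hi => hL2 i (hs hi)) hpair]
  congr 1
  ext ω
  simp

theorem repacking_block_variances_general
    (Ω : Type) (_mΩ : MeasurableSpace Ω) (μ : Measure Ω)
    (n N : ℕ) (X : ℕ → Ω → ℝ) (σ : ℕ → ℝ)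
    (hindep : iIndepFun
      (fun l : (Icc 1 n : Finset ℕ) => X l) μ)
    (hL2 : ∀ l, l ∈ Icc 1 n → MemLp (X l) 2 μ)
    (hvar : ∀ l, l ∈ Icc 1 n → variance (X l) μ = (σ l) ^ 2)
    (hsum : ∑ l ∈ Icc 1 n, (σ l) ^ 2 = 1)
    (hNσ : ∀ l, l ∈ Icc 1 n → (N : ℝ) ≤ 1 / (2 * (σ l) ^ 2)) :
    ∀ k, 1 ≤ k → k ≤ N →
      1 / (2 * (N : ℝ)) <
        variance (fun ω => ∑ l ∈ Ioc
            (Nat.findGreatest (fun l => (∑ i ∈ Icc 1 l, (σ i) ^ 2) ≤ ((k : ℝ) - 1) / N) n)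
            (Nat.findGreatest (fun l => (∑ i ∈ Icc 1 l, (σ i) ^ 2) ≤ (k : ℝ) / N) n),
            X l ω) μ ∧
      variance (fun ω => ∑ l ∈ Ioc
            (Nat.findGreatest (fun l => (∑ i ∈ Icc 1 l, (σ i) ^ 2) ≤ ((k : ℝ) - 1) / N) n)
            (Nat.findGreatest (fun l => (∑ i ∈ Icc 1 l, (σ i) ^ 2) ≤ (k : ℝ) / N) n),
            X l ω) μ < 2 / (N : ℝ) := by
  intro k hk1 hkN
  have hN : (0 : ℝ) < N := by exact_mod_cast hk1.trans hkN
  have hk1' : (1 : ℝ) ≤ k := by exact_mod_cast hk1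
  have hkN' : (k : ℝ) / N ≤ 1 := div_le_one_of_le₀ (by exact_mod_cast hkN) hN.le
  have hhalf : 1 / (2 * (N : ℝ)) = 1 / N / 2 := by ring
  have hstep : ∀ m < n, ∑ i ∈ Icc 1 (m + 1), σ i ^ 2 ≤ ∑ i ∈ Icc 1 m, σ i ^ 2 + 1 / (2 * N) := by
    intro m hm
    have hσ := le_one_div_of_le_one_div hN (hNσ (m + 1) (mem_Icc.mpr ⟨Nat.le_add_left 1 m, hm⟩))
    rw [sum_Icc_succ_top (Nat.le_add_left 1 m)]
    linarith
  have hst : ((k : ℝ) - 1) / N ≤ k / N := by gcongr; linarith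
  have htop : (k : ℝ) / N - 1 / (2 * N) < ∑ i ∈ Icc 1 n, σ i ^ 2 := by
    rw [hsum]
    linarith [show 0 < 1 / (2 * (N : ℝ)) by positivity]
  have hblock := Nat.abs_findGreatest_increment_sub_lt (S := fun m => ∑ i ∈ Icc 1 m, σ i ^ 2)
    hstep (by simpa using div_nonneg (sub_nonneg.mpr hk1') hN.le) hst
    ((sub_le_sub_right hst _).trans_lt htop) htop
  have hab := Nat.findGreatest_mono_of_le (S := fun m => ∑ i ∈ Icc 1 m, σ i ^ 2) (n := n) hst
  set a := Nat.findGreatest (fun l => ∑ i ∈ Icc 1 l, σ i ^ 2 ≤ ((k : ℝ) - 1) / N) n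
  set b := Nat.findGreatest (fun l => ∑ i ∈ Icc 1 l, σ i ^ 2 ≤ (k : ℝ) / N) n
  have hsub : Ioc a b ⊆ Icc 1 n :=
    (Ioc_subset_Ioc a.zero_le (Nat.findGreatest_le n)).trans (Icc_add_one_left_eq_Ioc 0 n).ge
  rw [hindep.variance_sum_of_subset hL2 hsub, sum_congr rfl fun l hl => hvar l (hsub hl),
    sum_Ioc_eq_sum_Icc_one_sub _ hab]
  rw [abs_sub_lt_iff] at hblock
  have hgap : (k : ℝ) / N - (k - 1) / N = 1 / N := by ring
  constructor <;> linarith [show 2 / (N : ℝ) = 2 * (1 / N) by ring]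

/-- Lemma 7.1 (repacking of summands): let `X₁, …, Xₙ` be independent random variables
with mean zero and variances `σₗ² > 0` with `σ₁² + ⋯ + σₙ² = 1`, and let
`σ = maxₗ σₗ`. Given `N ≥ 1`, set `n₀ = 0`,
`nₖ = max{ l ≤ n : σ₁² + ⋯ + σₗ² ≤ k/N }` and `Vₖ = ∑_{n_{k-1} < l ≤ nₖ} Xₗ`.
If `N ≤ 1/(2σ²)`, then `1/(2N) < Var(Vₖ) < 2/N` for each `k = 1, …, N`. -/
theorem repacking_block_variances
    (Ω : Type) (_mΩ : MeasurableSpace Ω) (μ : Measure Ω) [IsProbabilityMeasure μ]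
    (n N : ℕ) (X : ℕ → Ω → ℝ) (σ : ℕ → ℝ)
    (hn : 1 ≤ n) (hN : 1 ≤ N)
    (hmeas : ∀ l, l ∈ Icc 1 n → Measurable (X l))
    (hindep : iIndepFun
      (fun l : (Icc 1 n : Finset ℕ) => X l) μ)
    (hL2 : ∀ l, l ∈ Icc 1 n → MemLp (X l) 2 μ)
    (hmean : ∀ l, l ∈ Icc 1 n → ∫ ω, X l ω ∂μ = 0)
    (hσpos : ∀ l, l ∈ Icc 1 n → 0 < σ l)
    (hvar : ∀ l, l ∈ Icc 1 n → variance (X l) μ = (σ l) ^ 2)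
    (hsum : ∑ l ∈ Icc 1 n, (σ l) ^ 2 = 1)
    (hNσ : ∀ l, l ∈ Icc 1 n → (N : ℝ) ≤ 1 / (2 * (σ l) ^ 2)) :
    ∀ k, 1 ≤ k → k ≤ N →
      1 / (2 * (N : ℝ)) <
        variance (fun ω => ∑ l ∈ Ioc
            (Nat.findGreatest (fun l => (∑ i ∈ Icc 1 l, (σ i) ^ 2) ≤ ((k : ℝ) - 1) / N) n)
            (Nat.findGreatest (fun l => (∑ i ∈ Icc 1 l, (σ i) ^ 2) ≤ (k : ℝ) / N) n),
            X l ω) μ ∧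
      variance (fun ω => ∑ l ∈ Ioc
            (Nat.findGreatest (fun l => (∑ i ∈ Icc 1 l, (σ i) ^ 2) ≤ ((k : ℝ) - 1) / N) n)
            (Nat.findGreatest (fun l => (∑ i ∈ Icc 1 l, (σ i) ^ 2) ≤ (k : ℝ) / N) n),
            X l ω) μ < 2 / (N : ℝ) :=
  repacking_block_variances_general Ω _mΩ μ n N X σ hindep hL2 hvar hsum hNσ
end

section
/- Let X be a random variable with an absolutely continuous distribution whose density p satisfies p(x) ≤ M almost everywhere for a constant M, and with finite variance σ² > 0. Then X has finite entropy and D(X) ≤ log(M·σ·√(2πe)). -/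
open MeasureTheory

lemma neg_mul_log_le_two_sqrt (t : ℝ) (ht : 0 ≤ t) :
    -(t * Real.log t) ≤ 2 * Real.sqrt t := by
  rcases eq_or_lt_of_le ht with h | h
  · simp [← h]
  · set s := Real.sqrt t with hsdef
    have hs : 0 < s := Real.sqrt_pos.mpr h
    have hts : t = s * s := (Real.mul_self_sqrt ht).symm
    have key : -(s * Real.log s) ≤ 1 := by
      have h1 : Real.log s⁻¹ ≤ s⁻¹ - 1 :=
        Real.log_le_sub_one_of_pos (by positivity)
      rw [Real.log_inv] at h1
      have h2 := mul_le_mul_of_nonneg_left h1 hs.le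
      have h3 : s * s⁻¹ = 1 := mul_inv_cancel₀ hs.ne'
      nlinarith
    rw [hts, Real.log_mul hs.ne' hs.ne']
    nlinarith

/-- Inequality (13.1): if a random variable `X` has an absolutely continuous
distribution with density `p ≤ M` a.e. and finite variance `σ² > 0`, then `X` has
finite entropy (i.e. `p log p` is integrable) and `D(X) ≤ log(Mσ√(2πe))`. -/
theorem entDist_le_of_bounded_density (p : ℝ → ℝ) (M a σ : ℝ)
    (hp : IsProbDensity p)
    (hbound : ∀ᵐ x ∂(volume : Measure ℝ), p x ≤ M)
    (hmean : ∫ x, x * p x = a)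
    (hσ : 0 < σ)
    (hvar : ∫ x, (x - a) ^ 2 * p x = σ ^ 2) :
    Integrable (fun x => p x * Real.log (p x)) volume ∧
    entDist p σ ≤ Real.log (M * σ * Real.sqrt (2 * Real.pi * Real.exp 1)) := by
  obtain ⟨hpm, hpnn, hpint⟩ := hp
  -- integrability of p
  have hint1 : Integrable p := by
    by_contra h
    rw [integral_undef h] at hpint
    norm_num at hpint
  -- integrability of (x-a)^2 * p
  have hint2 : Integrable (fun x => (x - a) ^ 2 * p x) := by
    by_contra h
    rw [integral_undef h] at hvar
    have : (0:ℝ) < σ ^ 2 := by positivity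
    rw [← hvar] at this
    exact lt_irrefl _ this
  -- M > 0
  have hM : 0 < M := by
    by_contra hM
    push_neg at hM
    have hzero : p =ᵐ[volume] 0 := by
      filter_upwards [hbound] with x hx
      exact le_antisymm (hx.trans hM) (hpnn x)
    rw [integral_congr_ae hzero] at hpint
    simp at hpint
  -- integrability of 1/(1+(x-a)^2)
  have hint3 : Integrable (fun x : ℝ => 1 / (1 + (x - a) ^ 2)) := by
    have := (integrable_inv_one_add_sq).comp_sub_right a
    exact this.congr (Filter.Eventually.of_forall fun x => by simp [one_div])
  -- integrability of sqrt p
  have hint4 : Integrable (fun x => Real.sqrt (p x)) := by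
    have hmeas : AEStronglyMeasurable (fun x => Real.sqrt (p x)) volume :=
      (hpm.sqrt).aestronglyMeasurable
    have hint2' : Integrable (fun x => p x * (x - a) ^ 2) :=
      hint2.congr (Filter.Eventually.of_forall fun x => by ring)
    apply Integrable.mono ((hint1.add hint2').add hint3) hmeas
    filter_upwards with x
    simp only [Pi.add_apply]
    have h1 : ‖Real.sqrt (p x)‖ = Real.sqrt (p x) := by
      rw [Real.norm_eq_abs, abs_of_nonneg (Real.sqrt_nonneg _)]
    rw [h1]
    have h2 : 0 ≤ p x + p x * (x - a) ^ 2 + 1 / (1 + (x - a) ^ 2) :=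
      add_nonneg (add_nonneg (hpnn x) (mul_nonneg (hpnn x) (sq_nonneg _))) (by positivity)
    rw [Real.norm_eq_abs, abs_of_nonneg h2]
    -- AM-GM: sqrt(p) = sqrt(u*v) ≤ (u+v)/2 ≤ u+v with u = p(1+(x-a)^2), v = 1/(1+(x-a)^2)
    set u := p x * (1 + (x - a) ^ 2) with hu
    set v := 1 / (1 + (x - a) ^ 2) with hv
    have huv : u * v = p x := by
      rw [hu, hv]; field_simp
    have hun : 0 ≤ u := mul_nonneg (hpnn x) (by positivity)
    have hvn : 0 ≤ v := by positivity
    have key : Real.sqrt (p x) ≤ (u + v) / 2 := by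
      rw [← huv, Real.sqrt_mul hun]
      nlinarith [two_mul_le_add_sq (Real.sqrt u) (Real.sqrt v), Real.sq_sqrt hun,
        Real.sq_sqrt hvn, Real.sqrt_nonneg u, Real.sqrt_nonneg v]
    calc Real.sqrt (p x) ≤ (u + v) / 2 := key
      _ ≤ u + v := by linarith [add_nonneg hun hvn]
      _ = p x + p x * (x - a) ^ 2 + 1 / (1 + (x - a) ^ 2) := by rw [hu, hv]; ring
  -- integrability of p log p
  have hmeas2 : AEStronglyMeasurable (fun x => p x * Real.log (p x)) volume :=
    (hpm.mul (hpm.log)).aestronglyMeasurable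
  have hint5 : Integrable (fun x => p x * Real.log (p x)) := by
    apply Integrable.mono
      ((hint1.const_mul (max (Real.log M) 0)).add (hint4.const_mul 2)) hmeas2
    filter_upwards [hbound] with x hx
    simp only [Pi.add_apply]
    have h2 : 0 ≤ max (Real.log M) 0 * p x + 2 * Real.sqrt (p x) :=
      add_nonneg (mul_nonneg (le_max_right _ _) (hpnn x)) (by positivity)
    rw [Real.norm_eq_abs, Real.norm_eq_abs, abs_of_nonneg h2, abs_le]
    constructor
    · have := neg_mul_log_le_two_sqrt (p x) (hpnn x)
      nlinarith [mul_nonneg (le_max_right (Real.log M) 0) (hpnn x)]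
    · -- upper bound: p log p ≤ p * max(log M, 0)
      have hub : p x * Real.log (p x) ≤ max (Real.log M) 0 * p x := by
        rcases eq_or_lt_of_le (hpnn x) with h | h
        · simp [← h]
        · rcases le_or_gt (p x) 1 with h1 | h1
          · have : Real.log (p x) ≤ 0 := Real.log_nonpos (hpnn x) h1
            nlinarith [mul_nonneg (le_max_right (Real.log M) 0) (hpnn x)]
          · have hlog : Real.log (p x) ≤ max (Real.log M) 0 :=
              le_max_of_le_left (Real.log_le_log h hx)
            nlinarith
      have : 0 ≤ 2 * Real.sqrt (p x) := by positivity
      linarith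
  refine ⟨hint5, ?_⟩
  -- ∫ p log p ≤ log M
  have hle : ∫ x, p x * Real.log (p x) ≤ Real.log M := by
    have hmono : ∫ x, p x * Real.log (p x) ≤ ∫ x, p x * Real.log M := by
      apply integral_mono_ae hint5 (hint1.mul_const _)
      filter_upwards [hbound] with x hx
      rcases eq_or_lt_of_le (hpnn x) with h | h
      · simp [← h]
      · exact mul_le_mul_of_nonneg_left (Real.log_le_log h hx) (hpnn x)
    rw [integral_mul_const, hpint, one_mul] at hmono
    exact hmono
  have hsq : 0 < Real.sqrt (2 * Real.pi * Real.exp 1) := by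
    apply Real.sqrt_pos.mpr
    positivity
  rw [mul_assoc, Real.log_mul hM.ne' (by positivity)]
  unfold entDist
  linarith
end
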